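/- arXiv:1605.09073 — 5 statements merged into one kernel-verified Lean document; each statement's English description precedes it below -/
import Mathlib

section
/- Suppose h ∈ ℂ satisfies ‖hW‖ < 1 (operator norm) and Σ_{n=1}^∞ N^n |κ_n| |h|^n < 1. Then I − hW is invertible, the series Σ_{n=1}^∞ N^n κ_n h^n converges absolutely to a value different from 1, and the network transfer function satisfies eᵀ (I − hW)^{-1} e · h = h / (1 − Σ_{n=1}^∞ N^n κ_n h^n). (Theorem 1 of the paper: the network transfer function is determined by the chain motif cumulants through a feedback hierarchy.) -/
/-!
Put `m n = eᵀ (hW)ⁿ e = (N h)ⁿ μ n` and `c n = (N h)ⁿ⁺¹ κ (n + 1)`. The cumulant recursion says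
exactly that `m (n + 1) = ∑_{k ≤ n} c k m (n - k)` with `m 0 = 1`, i.e. the generating series
satisfy `M = 1 + T M`. Since `‖hW‖ < 1`, the Neumann series `∑ (hW)ⁿ` converges absolutely to
`(1 - hW)⁻¹`, so `M = eᵀ (1 - hW)⁻¹ e`; the Cauchy product of the two absolutely convergent
series then gives `M (1 - T) = 1`, and `‖T‖ ≤ S < 1` keeps `T` away from `1`.
-/

open Matrix Finset

section L2OperatorNorm

open scoped Matrix.Norms.L2Operator

variable {n 𝕜 : Type*} [RCLike 𝕜] [Fintype n] [DecidableEq n]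

theorem Matrix.isUnit_one_sub_of_norm_toEuclideanCLM_lt_one {A : Matrix n n 𝕜}
    (hA : ‖toEuclideanCLM (n := n) (𝕜 := 𝕜) A‖ < 1) : IsUnit (1 - A) :=
  isUnit_one_sub_of_norm_lt_one (by rwa [← l2_opNorm_toEuclideanCLM])

theorem Matrix.hasSum_dotProduct_pow_mulVec {A : Matrix n n 𝕜}
    (hA : ‖toEuclideanCLM (n := n) (𝕜 := 𝕜) A‖ < 1) (u v : n → 𝕜) :
    HasSum (fun k ↦ u ⬝ᵥ (A ^ k) *ᵥ v) (u ⬝ᵥ (1 - A)⁻¹ *ᵥ v) ∧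
      Summable fun k ↦ ‖u ⬝ᵥ (A ^ k) *ᵥ v‖ := by
  have hA' : ‖A‖ < 1 := by rwa [← l2_opNorm_toEuclideanCLM]
  let ψ : Matrix n n 𝕜 →L[𝕜] 𝕜 := LinearMap.toContinuousLinearMap
    { toFun := fun B ↦ u ⬝ᵥ B *ᵥ v
      map_add' := fun B C ↦ by simp only [add_mulVec, dotProduct_add]
      map_smul' := fun c B ↦ by simp only [smul_mulVec, dotProduct_smul, RingHom.id_apply] }
  have hneumann : HasSum (fun k ↦ A ^ k) (1 - A)⁻¹ := by
    rw [nonsing_inv_eq_ringInverse]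
    exact hasSum_geom_series_inverse A hA'
  exact ⟨hneumann.map ψ ψ.continuous,
    ((summable_norm_geometric_of_norm_lt_one hA').mul_left ‖ψ‖).of_nonneg_of_le
      (fun _ ↦ norm_nonneg _) fun k ↦ ψ.le_opNorm (A ^ k)⟩

end L2OperatorNorm

theorem mul_one_sub_eq_one_of_hasSum_renewal {R : Type*} [NormedCommRing R] [CompleteSpace R]
    {m c : ℕ → R} {M T : R} (hm : HasSum m M) (hc : HasSum c T)
    (hm_norm : Summable fun n ↦ ‖m n‖) (hc_norm : Summable fun n ↦ ‖c n‖) (hm0 : m 0 = 1)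
    (hrec : ∀ n, m (n + 1) = ∑ k ∈ range (n + 1), c k * m (n - k)) :
    M * (1 - T) = 1 := by
  have hconv : HasSum (fun n ↦ m (n + 1)) (T * M) := by
    simpa only [hrec, hc.tsum_eq, hm.tsum_eq] using
      hasSum_sum_range_mul_of_summable_norm hc_norm hm_norm
  have hshift : HasSum (fun n ↦ m (n + 1)) (M - 1) := by
    simpa [hm0] using (hasSum_nat_add_iff' 1).mpr hm
  linear_combination hshift.unique hconv

theorem moment_succ_eq_sum_cumulant_mul {R : Type*} [CommRing R] {μ κ : ℕ → R}
    (hμ0 : μ 0 = 1) (hκ : ∀ n, 1 ≤ n → κ n = μ n - ∑ k ∈ Ico 1 n, κ k * μ (n - k)) (n : ℕ) :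
    μ (n + 1) = ∑ k ∈ range (n + 1), κ (k + 1) * μ (n - k) := by
  have hIco : ∑ k ∈ Ico 1 (n + 1), κ k * μ (n + 1 - k) =
      ∑ k ∈ range n, κ (k + 1) * μ (n - k) := by
    rw [sum_Ico_eq_sum_range]
    refine sum_congr (by simp) fun k _ ↦ ?_
    rw [add_comm 1 k, Nat.add_sub_add_right]
  rw [sum_range_succ, Nat.sub_self, hμ0, mul_one, ← hIco, hκ (n + 1) (Nat.le_add_left 1 n)]
  ring

theorem pow_mul_succ_eq_sum_of_eq_sum {R : Type*} [CommRing R] {a b : ℕ → R}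
    (hrec : ∀ n, a (n + 1) = ∑ k ∈ range (n + 1), b k * a (n - k)) (x : R) (n : ℕ) :
    x ^ (n + 1) * a (n + 1) =
      ∑ k ∈ range (n + 1), x ^ (k + 1) * b k * (x ^ (n - k) * a (n - k)) := by
  rw [hrec, mul_sum]
  refine sum_congr rfl fun k hk ↦ ?_
  rw [← Nat.add_sub_cancel' (Nat.lt_succ_iff.mp (mem_range.mp hk)), pow_add]
  simp only [Nat.add_sub_cancel_left]
  ring

theorem Matrix.const_dotProduct_mulVec_const {n α : Type*} [Fintype n] [CommSemiring α]
    (c : α) (B : Matrix n n α) :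
    (fun _ ↦ c) ⬝ᵥ B *ᵥ (fun _ ↦ c) = c * c * ∑ i, ∑ j, B i j := by
  simp only [dotProduct, mulVec, mul_sum]
  exact sum_congr rfl fun i _ ↦ sum_congr rfl fun j _ ↦ by ring

theorem sum_pow_apply_eq_motif_moment {N : ℕ} (hN : 0 < N) {W : Matrix (Fin N) (Fin N) ℂ}
    {μ : ℕ → ℂ} (hμ0 : μ 0 = 1)
    (hμ : ∀ n : ℕ, 1 ≤ n →
      μ n = (1 / (N : ℂ) ^ (n + 1)) * ∑ i : Fin N, ∑ j : Fin N, (W ^ n) i j) (n : ℕ) :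
    ∑ i, ∑ j, (W ^ n) i j = (N : ℂ) ^ (n + 1) * μ n := by
  rcases n.eq_zero_or_pos with rfl | hn
  · simp [one_apply, hμ0]
  · have : (N : ℂ) ≠ 0 := by exact_mod_cast hN.ne'
    rw [hμ n hn]
    field_simp

theorem uniform_dotProduct_smul_pow_mulVec {N : ℕ} (hN : 0 < N) {W : Matrix (Fin N) (Fin N) ℂ}
    {μ : ℕ → ℂ} (hμ0 : μ 0 = 1)
    (hμ : ∀ n : ℕ, 1 ≤ n →
      μ n = (1 / (N : ℂ) ^ (n + 1)) * ∑ i : Fin N, ∑ j : Fin N, (W ^ n) i j) (h : ℂ) (n : ℕ) :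
    (fun _ ↦ ((Real.sqrt N : ℂ))⁻¹) ⬝ᵥ ((h • W) ^ n) *ᵥ (fun _ ↦ ((Real.sqrt N : ℂ))⁻¹) =
      ((N : ℂ) * h) ^ n * μ n := by
  have hsqrt : ((Real.sqrt N : ℂ))⁻¹ * ((Real.sqrt N : ℂ))⁻¹ = (N : ℂ)⁻¹ := by
    rw [← mul_inv, ← Complex.ofReal_mul, Real.mul_self_sqrt (Nat.cast_nonneg N),
      Complex.ofReal_natCast]
  have hN' : (N : ℂ) ≠ 0 := by exact_mod_cast hN.ne'
  simp only [const_dotProduct_mulVec_const, smul_pow, Matrix.smul_apply, smul_eq_mul, ← mul_sum]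
  rw [sum_pow_apply_eq_motif_moment hN hμ0 hμ, hsqrt]
  field_simp
  ring

/-- **Theorem 1 of the paper.** If `‖h • W‖ < 1` (Euclidean operator norm) and the series of
absolute values `∑_{n≥1} N^n |κ_n| |h|^n` converges to `S < 1`, then `I - h W` is invertible,
the series `∑_{n≥1} N^n κ_n h^n` converges (absolutely) to some `T ≠ 1`, and the network
transfer function satisfies `eᵀ (I − hW)⁻¹ e ⬝ h = h / (1 − T)`. -/
theorem network_transfer_function_motif_cumulant_resumming
    (N : ℕ) (hN : 0 < N) (W : Matrix (Fin N) (Fin N) ℂ)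
    (e : Fin N → ℂ) (he : e = fun _ => ((Real.sqrt N : ℂ))⁻¹)
    (μ κ : ℕ → ℂ)
    (hμ0 : μ 0 = 1)
    (hμ : ∀ n : ℕ, 1 ≤ n →
      μ n = (1 / (N : ℂ) ^ (n + 1)) * ∑ i : Fin N, ∑ j : Fin N, (W ^ n) i j)
    (hκ : ∀ n : ℕ, 1 ≤ n →
      κ n = μ n - ∑ k ∈ Finset.Ico 1 n, κ k * μ (n - k))
    (h : ℂ)
    (hnorm : ‖Matrix.toEuclideanCLM (𝕜 := ℂ) (h • W)‖ < 1)
    (S : ℝ)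
    (hS : HasSum (fun n : ℕ =>
      (N : ℝ) ^ (n + 1) * ‖κ (n + 1)‖ * ‖h‖ ^ (n + 1)) S)
    (hS1 : S < 1) :
    IsUnit (1 - h • W) ∧
    ∃ T : ℂ,
      HasSum (fun n : ℕ => (N : ℂ) ^ (n + 1) * κ (n + 1) * h ^ (n + 1)) T ∧
      T ≠ 1 ∧
      e ⬝ᵥ (1 - h • W)⁻¹.mulVec e * h = h / (1 - T) := by
  subst he
  obtain ⟨hm, hm_norm⟩ := hasSum_dotProduct_pow_mulVec hnorm (fun _ ↦ ((Real.sqrt N : ℂ))⁻¹)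
    (fun _ ↦ ((Real.sqrt N : ℂ))⁻¹)
  have hmoment := uniform_dotProduct_smul_pow_mulVec hN hμ0 hμ h
  set c : ℕ → ℂ := fun n ↦ (N : ℂ) ^ (n + 1) * κ (n + 1) * h ^ (n + 1)
  have hc_norm : Summable fun n ↦ ‖c n‖ := by
    simpa only [c, norm_mul, norm_pow, Complex.norm_natCast] using hS.summable
  have hT : ‖∑' n, c n‖ < 1 := by
    refine (norm_tsum_le_tsum_norm hc_norm).trans_lt ?_
    simpa only [c, norm_mul, norm_pow, Complex.norm_natCast, hS.tsum_eq] using hS1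
  have hT1 : ∑' n, c n ≠ 1 := fun h1 ↦ by simp [h1] at hT
  have hrec : ∀ n, ((N : ℂ) * h) ^ (n + 1) * μ (n + 1) =
      ∑ k ∈ range (n + 1), c k * (((N : ℂ) * h) ^ (n - k) * μ (n - k)) := fun n ↦ by
    rw [pow_mul_succ_eq_sum_of_eq_sum (moment_succ_eq_sum_cumulant_mul hμ0 hκ)]
    exact sum_congr rfl fun k _ ↦ by ring
  have hresum := mul_one_sub_eq_one_of_hasSum_renewal hm hc_norm.of_norm.hasSum hm_norm hc_norm
    ((hmoment 0).trans (by simp [hμ0])) (by simpa only [hmoment] using hrec)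
  refine ⟨isUnit_one_sub_of_norm_toEuclideanCLM_lt_one hnorm, _, hc_norm.of_norm.hasSum, hT1, ?_⟩
  rw [eq_div_iff (sub_ne_zero.2 hT1.symm)]
  linear_combination h * hresum
end

section
/- Let z ∈ ℂ satisfy Σ_{n≥1} |κ_n| |z|^n < 1. Then the series Σ_{n≥0} μ_n z^n converges absolutely and Σ_{n≥0} μ_n z^n = 1 / (1 − Σ_{n≥1} κ_n z^n). (The analytic moment–cumulant resumming identity underlying Theorem 1.) -/
/-!
Put `c n = κ (n + 1) z ^ (n + 1)` and `m n = μ n z ^ n`. The recursion becomes the renewal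
equation `m (n + 1) = ∑_{j ≤ n} c j m (n - j)`, which says `M = 1 + K M` for the generating
sums `M = ∑ m`, `K = ∑ c` as soon as both converge absolutely. Taking norms, a partial sum `P`
of `∑ ‖m‖` satisfies `P ≤ 1 + S P`, so `∑ ‖c‖ = S < 1` bounds all of them by `1 / (1 - S)`.
-/

open Finset

theorem sum_Icc_one_succ_eq_sum_range {M : Type*} [AddCommMonoid M] (f : ℕ → M) (n : ℕ) :
    ∑ k ∈ Icc 1 (n + 1), f k = ∑ j ∈ range (n + 1), f (j + 1) := by
  rw [range_eq_Ico, sum_Ico_add', ← Ico_add_one_right_eq_Icc]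

theorem sum_range_le_of_succ_le_convolution {a b : ℕ → ℝ} {S : ℝ} (ha : ∀ n, 0 ≤ a n)
    (hb : ∀ n, 0 ≤ b n) (hbS : HasSum b S) (hS : S < 1)
    (hab : ∀ n, a (n + 1) ≤ ∑ j ∈ range (n + 1), b j * a (n - j)) (N : ℕ) :
    ∑ n ∈ range N, a n ≤ a 0 / (1 - S) := by
  have hS0 : 0 ≤ S := hbS.nonneg hb
  have hstep : ∀ N, ∑ n ∈ range (N + 1), a n ≤ a 0 + S * ∑ n ∈ range N, a n := fun N =>
    calc ∑ n ∈ range (N + 1), a n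
        = a 0 + ∑ n ∈ range N, a (n + 1) := by rw [sum_range_succ', add_comm]
      _ ≤ a 0 + ∑ n ∈ range N, ∑ j ∈ range (n + 1), b j * a (n - j) := by
          gcongr with n; exact hab n
      _ = a 0 + ∑ j ∈ range N, b j * ∑ i ∈ range (N - j), a i := by
          simp only [sum_range_diag_flip N (fun j i => b j * a i), mul_sum]
      _ ≤ a 0 + ∑ j ∈ range N, b j * ∑ i ∈ range N, a i := by
          gcongr with j hj
          · exact hb j
          · exact fun i _ _ => ha i
          · exact Nat.sub_le N j
      _ ≤ a 0 + S * ∑ n ∈ range N, a n := by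
          rw [← sum_mul]
          gcongr
          · exact sum_nonneg fun i _ => ha i
          · exact sum_le_hasSum _ (fun i _ => hb i) hbS
  induction N with
  | zero => simpa using div_nonneg (ha 0) (by linarith : (0 : ℝ) ≤ 1 - S)
  | succ N ih =>
    refine (hstep N).trans ?_
    have h1S : 0 < 1 - S := by linarith
    calc a 0 + S * ∑ n ∈ range N, a n ≤ a 0 + S * (a 0 / (1 - S)) := by gcongr
      _ = a 0 / (1 - S) := by field_simp; ring

theorem summable_of_succ_le_convolution {a b : ℕ → ℝ} {S : ℝ} (ha : ∀ n, 0 ≤ a n)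
    (hb : ∀ n, 0 ≤ b n) (hbS : HasSum b S) (hS : S < 1)
    (hab : ∀ n, a (n + 1) ≤ ∑ j ∈ range (n + 1), b j * a (n - j)) : Summable a :=
  summable_of_sum_range_le ha (sum_range_le_of_succ_le_convolution ha hb hbS hS hab)

theorem one_sub_tsum_mul_tsum_of_succ_eq_convolution {R : Type*} [NormedRing R] [CompleteSpace R]
    {c m : ℕ → R} (hc : Summable fun n => ‖c n‖) (hm : Summable fun n => ‖m n‖)
    (hcm : ∀ n, m (n + 1) = ∑ j ∈ range (n + 1), c j * m (n - j)) :
    (1 - ∑' n, c n) * ∑' n, m n = m 0 := by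
  have hshift : ∑' n, m (n + 1) = (∑' n, c n) * ∑' n, m n := by
    rw [tsum_mul_tsum_eq_tsum_sum_range_of_summable_norm hc hm]
    exact tsum_congr hcm
  rw [sub_mul, one_mul, ← hshift, hm.of_norm.tsum_eq_zero_add, add_sub_cancel_right]

theorem moment_succ_mul_pow_eq_convolution {R : Type*} [CommSemiring R] {μ κ : ℕ → R}
    (hrec : ∀ n : ℕ, 1 ≤ n → μ n = ∑ k ∈ Icc 1 n, κ k * μ (n - k)) (z : R) (n : ℕ) :
    μ (n + 1) * z ^ (n + 1) =
      ∑ j ∈ range (n + 1), (κ (j + 1) * z ^ (j + 1)) * (μ (n - j) * z ^ (n - j)) := by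
  rw [hrec (n + 1) n.succ_pos, sum_Icc_one_succ_eq_sum_range, sum_mul]
  refine sum_congr rfl fun j hj => ?_
  have hjn : n + 1 = (j + 1) + (n - j) := by have := mem_range.mp hj; omega
  rw [Nat.add_sub_add_right, hjn, pow_add]
  ring

/-- Analytic moment–cumulant resumming identity. If the moment–cumulant recursion holds and
`∑_{n≥1} |κ_n| |z|^n` converges to a value `< 1`, then `∑_{n≥0} μ_n z^n` converges
absolutely and equals `1 / (1 - ∑_{n≥1} κ_n z^n)`. -/
theorem moment_cumulant_resumming
    (μ : ℕ → ℂ) (κ : ℕ → ℂ)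
    (hμ0 : μ 0 = 1)
    (hrec : ∀ n : ℕ, 1 ≤ n →
      μ n = ∑ k ∈ Finset.Icc 1 n, κ k * μ (n - k))
    (z : ℂ) (S : ℝ)
    (hS : HasSum (fun n : ℕ => ‖κ (n + 1)‖ * ‖z‖ ^ (n + 1)) S)
    (hS1 : S < 1) :
    Summable (fun n : ℕ => ‖μ n‖ * ‖z‖ ^ n) ∧
    ∃ K : ℂ,
      HasSum (fun n : ℕ => κ (n + 1) * z ^ (n + 1)) K ∧
      HasSum (fun n : ℕ => μ n * z ^ n) (1 / (1 - K)) := by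
  set c : ℕ → ℂ := fun n => κ (n + 1) * z ^ (n + 1)
  set m : ℕ → ℂ := fun n => μ n * z ^ n
  have hcm : ∀ n, m (n + 1) = ∑ j ∈ range (n + 1), c j * m (n - j) :=
    moment_succ_mul_pow_eq_convolution hrec z
  have hc : HasSum (fun n => ‖c n‖) S := by simpa [c, norm_mul, norm_pow] using hS
  have hm : Summable fun n => ‖m n‖ := by
    refine summable_of_succ_le_convolution (fun n => norm_nonneg _) (fun n => norm_nonneg _)
      hc hS1 fun n => ?_
    rw [hcm n]
    exact (norm_sum_le _ _).trans_eq (sum_congr rfl fun j _ => norm_mul _ _)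
  have hresum : (1 - ∑' n, c n) * ∑' n, m n = 1 := by
    simpa [m, hμ0] using one_sub_tsum_mul_tsum_of_succ_eq_convolution hc.summable hm hcm
  refine ⟨by simpa [m, norm_mul, norm_pow] using hm, ∑' n, c n, hc.summable.of_norm.hasSum, ?_⟩
  rw [← eq_one_div_of_mul_eq_one_right hresum]
  exact hm.of_norm.hasSum
end

section
/- Suppose W𝟙 = r𝟙 with r ∈ ℝ (constant row sums), τ > 0, and rτ < 1, and set τ′ := τ/(1 − rτ). Then for every s ∈ ℂ with s ≠ −1/τ such that I − h(s)W is invertible, the network transfer function satisfies G(s) := eᵀ(I − h(s)W)^{-1} e · h(s) = 1/(s + 1/τ′). That is, the network acts as a first-order filter whose time constant is f(τ) = τ/(1 − rτ), the g = 1 instance of Theorem 2 for Erdős–Rényi-type networks. -/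
open Matrix

/-- For a network with constant row sums `r` and exponential node filters
`h(s) = 1/(s + 1/τ)` with `τ > 0` and `r τ < 1`, the network transfer function is the
first-order filter `G(s) = 1/(s + 1/τ')` with the new time constant `τ' = τ/(1 - r τ)`
(the `g = 1` case of Theorem 2 for Erdős–Rényi-type networks). -/
theorem erdos_renyi_network_time_constant
    (N : ℕ) (hN : 0 < N) (W : Matrix (Fin N) (Fin N) ℂ)
    (e : Fin N → ℂ) (he : e = fun _ => ((Real.sqrt N : ℂ))⁻¹)
    (r : ℝ)
    (hrow : W.mulVec (fun _ => 1) = fun _ => (r : ℂ))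
    (τ : ℝ) (hτ : 0 < τ) (hrτ : r * τ < 1)
    (τ' : ℝ) (hτ' : τ' = τ / (1 - r * τ)) :
    ∀ s : ℂ, s ≠ -(1 / (τ : ℂ)) →
      IsUnit (1 - (1 / (s + 1 / (τ : ℂ))) • W) →
      e ⬝ᵥ (1 - (1 / (s + 1 / (τ : ℂ))) • W)⁻¹.mulVec e * (1 / (s + 1 / (τ : ℂ))) =
        1 / (s + 1 / (τ' : ℂ)) := by
  intro s hs hU
  set h : ℂ := 1 / (s + 1 / (τ : ℂ)) with hh
  set A : Matrix (Fin N) (Fin N) ℂ := 1 - h • W with hA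
  have hτ0 : (τ : ℂ) ≠ 0 := by exact_mod_cast hτ.ne'
  have hden : s + 1 / (τ : ℂ) ≠ 0 := by
    intro h0
    exact hs (by linear_combination h0)
  have hh0 : h ≠ 0 := one_div_ne_zero hden
  have hsqrt : (Real.sqrt N : ℂ) ≠ 0 := by
    exact_mod_cast (Real.sqrt_pos.2 (by exact_mod_cast hN)).ne'
  have hWe : W.mulVec e = (r : ℂ) • e := by
    subst he
    have : (fun (_ : Fin N) => ((Real.sqrt N : ℂ))⁻¹) =
        ((Real.sqrt N : ℂ))⁻¹ • (fun _ => (1 : ℂ)) := by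
      funext i; simp
    rw [this, Matrix.mulVec_smul, hrow]
    funext i; simp [mul_comm]
  have hAe : A.mulVec e = (1 - h * (r : ℂ)) • e := by
    rw [hA, Matrix.sub_mulVec, Matrix.one_mulVec, Matrix.smul_mulVec, hWe]
    funext i; simp [smul_smul]; ring
  have hdet : IsUnit A.det := (Matrix.isUnit_iff_isUnit_det A).1 hU
  have hinvA : A⁻¹ * A = 1 := Matrix.nonsing_inv_mul A hdet
  have hne : (1 - h * (r : ℂ)) ≠ 0 := by
    intro h0
    have h1 : A.mulVec e = 0 := by rw [hAe, h0, zero_smul]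
    have h2 : A⁻¹.mulVec (A.mulVec e) = e := by
      rw [Matrix.mulVec_mulVec, hinvA, Matrix.one_mulVec]
    rw [h1, Matrix.mulVec_zero] at h2
    have := congrFun h2 ⟨0, hN⟩
    rw [he] at this
    exact hsqrt (inv_eq_zero.1 (by simpa using this.symm))
  have hinv : A⁻¹.mulVec e = (1 - h * (r : ℂ))⁻¹ • e := by
    have hx : A.mulVec ((1 - h * (r : ℂ))⁻¹ • e) = e := by
      rw [Matrix.mulVec_smul, hAe, smul_smul, inv_mul_cancel₀ hne, one_smul]
    calc A⁻¹.mulVec e = A⁻¹.mulVec (A.mulVec ((1 - h * (r : ℂ))⁻¹ • e)) := by rw [hx]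
    _ = (1 - h * (r : ℂ))⁻¹ • e := by
        rw [Matrix.mulVec_mulVec, hinvA, Matrix.one_mulVec]
  have hee : e ⬝ᵥ e = 1 := by
    subst he
    have : ((Real.sqrt N : ℂ))⁻¹ * ((Real.sqrt N : ℂ))⁻¹ = (N : ℂ)⁻¹ := by
      rw [← mul_inv]
      norm_cast
      rw [Real.mul_self_sqrt (by positivity)]
      push_cast; ring
    have hNc : (N : ℂ) ≠ 0 := by exact_mod_cast hN.ne'
    simp [dotProduct, this, Finset.sum_const]
    field_simp
  rw [hinv, dotProduct_smul, hee, smul_eq_mul, mul_one]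
  -- now: (1 - h*r)⁻¹ * h = 1/(s + 1/τ')
  have h1rτ : (1 : ℂ) - (r : ℂ) * (τ : ℂ) ≠ 0 := by
    have h' : (1:ℝ) - r * τ ≠ 0 := by linarith
    exact_mod_cast h'
  have hτ'c : (τ' : ℂ) = (τ : ℂ) / (1 - (r : ℂ) * (τ : ℂ)) := by
    rw [hτ']; push_cast; ring
  have hτ'inv : 1 / (τ' : ℂ) = 1 / (τ : ℂ) - (r : ℂ) := by
    rw [hτ'c]; field_simp
  have hkey : s + 1 / (τ' : ℂ) = (1 - h * (r : ℂ)) / h := by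
    have hhinv : (1:ℂ) / h = s + 1 / (τ:ℂ) := by rw [hh, one_div_one_div]
    rw [hτ'inv, sub_div, mul_div_cancel_left₀ _ hh0, hhinv]
    ring
  rw [hkey, one_div_div, div_eq_mul_inv, mul_comm]
end

section
/- Assume B_1,…,B_N are i.i.d. square-integrable with mean b̄ and variance σ_B², C_1,…,C_N are i.i.d. square-integrable with mean c̄ and variance σ_C², and the vector C is independent of the vector B. Then for any fixed N×N real matrix M, Var(Σ_{i,j} C_i M_{ij} B_j) = b̄² σ_C² Σ_i (Σ_j M_{ij})² + c̄² σ_B² Σ_j (Σ_i M_{ij})² + σ_B² σ_C² Σ_{i,j} M_{ij}². (This exact variance formula yields the computable confidence interval for the transfer function of a network with random input and output weights.) -/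
open MeasureTheory ProbabilityTheory

/-!
Expanding the variance by bilinearity of the covariance leaves the covariances of the products
`Cᵢ Bⱼ` and `Cₖ Bₗ`. Since the vector `C` is independent of the vector `B`, each of them factors as
`cov(Cᵢ, Cₖ) cov(Bⱼ, Bₗ) + cov(Cᵢ, Cₖ) E[Bⱼ] E[Bₗ] + E[Cᵢ] E[Cₖ] cov(Bⱼ, Bₗ)`, and independence
within each vector gives `cov(Cᵢ, Cₖ) = σ_C² δᵢₖ` and `cov(Bⱼ, Bₗ) = σ_B² δⱼₗ`. Summing these
Kronecker deltas against `Mᵢⱼ Mₖₗ` produces the three sums of the formula.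
-/

namespace ProbabilityTheory

variable {Ω : Type*} [MeasurableSpace Ω] {P : Measure Ω}

lemma IndepFun.memLp_two_mul {X Y : Ω → ℝ} (h : IndepFun X Y P) (hX : MemLp X 2 P)
    (hY : MemLp Y 2 P) : MemLp (X * Y) 2 P := by
  refine (memLp_two_iff_integrable_sq
    (hX.aestronglyMeasurable.mul hY.aestronglyMeasurable)).2 ?_
  have hsq : IndepFun (fun ω => X ω ^ 2) (fun ω => Y ω ^ 2) P :=
    h.comp (φ := fun x => x ^ 2) (ψ := fun y => y ^ 2) (by fun_prop) (by fun_prop)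
  simp only [Pi.mul_apply, mul_pow]
  exact hsq.integrable_mul hX.integrable_sq hY.integrable_sq

lemma covariance_eq_ite_of_pairwise_indepFun {ι : Type*} [DecidableEq ι] {X : ι → Ω → ℝ}
    (hX : ∀ i, MemLp (X i) 2 P) (h : Pairwise fun i j => IndepFun (X i) (X j) P) (i j : ι) :
    cov[X i, X j; P] = if i = j then Var[X i; P] else 0 := by
  split_ifs with hij
  · rw [hij, covariance_self (hX j).aestronglyMeasurable.aemeasurable]
  · exact (h hij).covariance_eq_zero (hX i) (hX j)

variable [IsProbabilityMeasure P]

lemma covariance_mul_mul_of_indepFun {X X' Y Y' : Ω → ℝ}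
    (h : IndepFun (fun ω => (X ω, X' ω)) (fun ω => (Y ω, Y' ω)) P)
    (hX : MemLp X 2 P) (hX' : MemLp X' 2 P) (hY : MemLp Y 2 P) (hY' : MemLp Y' 2 P) :
    cov[X * Y, X' * Y'; P] = cov[X, X'; P] * cov[Y, Y'; P] + cov[X, X'; P] * (P[Y] * P[Y'])
      + P[X] * P[X'] * cov[Y, Y'; P] := by
  have hXY : IndepFun X Y P := h.comp measurable_fst measurable_fst
  have hXY' : IndepFun X' Y' P := h.comp measurable_snd measurable_snd
  have hprod : IndepFun (X * X') (Y * Y') P :=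
    h.comp (φ := fun p : ℝ × ℝ => p.1 * p.2) (ψ := fun p : ℝ × ℝ => p.1 * p.2)
      (by fun_prop) (by fun_prop)
  have h4 : P[X * Y * (X' * Y')] = P[X * X'] * P[Y * Y'] := by
    rw [show X * Y * (X' * Y') = X * X' * (Y * Y') by ring]
    exact hprod.integral_mul_eq_mul_integral
      (hX.aestronglyMeasurable.mul hX'.aestronglyMeasurable)
      (hY.aestronglyMeasurable.mul hY'.aestronglyMeasurable)
  rw [covariance_eq_sub (hXY.memLp_two_mul hX hY) (hXY'.memLp_two_mul hX' hY'),
    covariance_eq_sub hX hX', covariance_eq_sub hY hY', h4,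
    hXY.integral_mul_eq_mul_integral hX.aestronglyMeasurable hY.aestronglyMeasurable,
    hXY'.integral_mul_eq_mul_integral hX'.aestronglyMeasurable hY'.aestronglyMeasurable]
  ring

variable {ι κ : Type*} [Fintype ι] [Fintype κ]

theorem variance_sum_sum_mul_mul_of_indepFun (M : Matrix ι κ ℝ) {C : ι → Ω → ℝ}
    {B : κ → Ω → ℝ} (hC : ∀ i, MemLp (C i) 2 P) (hB : ∀ j, MemLp (B j) 2 P)
    (h : IndepFun (fun ω i => C i ω) (fun ω j => B j ω) P) :
    Var[fun ω => ∑ i, ∑ j, C i ω * M i j * B j ω; P] =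
      ∑ i, ∑ k, ∑ j, ∑ l, M i j * M k l *
        (cov[C i, C k; P] * cov[B j, B l; P] + cov[C i, C k; P] * (P[B j] * P[B l])
          + P[C i] * P[C k] * cov[B j, B l; P]) := by
  have hCB : ∀ i j, IndepFun (C i) (B j) P := fun i j =>
    h.comp (measurable_pi_apply i) (measurable_pi_apply j)
  have e : ∀ i j, (fun ω => C i ω * M i j * B j ω) = fun ω => M i j * (C i * B j) ω :=
    fun i j => by funext ω; simp only [Pi.mul_apply]; ring
  have hterm : ∀ i j, MemLp (fun ω => C i ω * M i j * B j ω) 2 P := fun i j =>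
    e i j ▸ ((hCB i j).memLp_two_mul (hC i) (hB j)).const_mul (M i j)
  have hrow : ∀ i, MemLp (fun ω => ∑ j, C i ω * M i j * B j ω) 2 P := fun i =>
    memLp_finsetSum _ fun j _ => hterm i j
  rw [← covariance_self (memLp_finsetSum _ fun i _ => hrow i).aestronglyMeasurable.aemeasurable,
    covariance_fun_sum_fun_sum hrow hrow]
  refine Finset.sum_congr rfl fun i _ => Finset.sum_congr rfl fun k _ => ?_
  rw [covariance_fun_sum_fun_sum (hterm i) (hterm k)]
  refine Finset.sum_congr rfl fun j _ => Finset.sum_congr rfl fun l _ => ?_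
  rw [e, e, covariance_const_mul_left, covariance_const_mul_right, ← mul_assoc,
    covariance_mul_mul_of_indepFun (h.comp (φ := fun x => (x i, x k)) (ψ := fun y => (y j, y l))
      (by fun_prop) (by fun_prop)) (hC i) (hC k) (hB j) (hB l)]

end ProbabilityTheory

theorem Matrix.sum_sum_sum_sum_mul_ite {R ι κ : Type*} [CommSemiring R] [Fintype ι] [Fintype κ]
    [DecidableEq ι] [DecidableEq κ] (M : Matrix ι κ R) (a b c d : R) :
    ∑ i, ∑ k, ∑ j, ∑ l, M i j * M k l *
        ((if i = k then c else 0) * (if j = l then d else 0) + (if i = k then c else 0) * (b * b)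
          + a * a * (if j = l then d else 0)) =
      b ^ 2 * c * (∑ i, (∑ j, M i j) ^ 2) + a ^ 2 * d * (∑ j, (∑ i, M i j) ^ 2) +
        c * d * ∑ i, ∑ j, M i j ^ 2 := by
  have hcol : ∑ i, ∑ k, ∑ j, M i j * M k j = ∑ j, (∑ i, M i j) ^ 2 := by
    simp only [sq, Finset.sum_mul_sum]
    conv_lhs => enter [2, i]; rw [Finset.sum_comm]
    exact Finset.sum_comm
  simp only [mul_add, mul_ite, ite_mul, mul_zero, zero_mul, Finset.sum_add_distrib,
    Finset.sum_ite_irrel, Finset.sum_const_zero, Finset.sum_ite_eq, Finset.mem_univ, if_true,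
    ← Finset.sum_mul, ← hcol]
  simp only [sq, Finset.sum_mul_sum]
  ring

theorem variance_transfer_function_random_weights_general
    {Ω : Type*} [MeasurableSpace Ω] (P : Measure Ω) [IsProbabilityMeasure P]
    (N : ℕ) (M : Matrix (Fin N) (Fin N) ℝ)
    (B C : Fin N → Ω → ℝ) (bbar cbar σB σC : ℝ)
    (hB2 : ∀ i, MemLp (B i) 2 P)
    (hBindep : iIndepFun B P)
    (hBmean : ∀ i, ∫ ω, B i ω ∂P = bbar)
    (hBvar : ∀ i, variance (B i) P = σB ^ 2)
    (hC2 : ∀ i, MemLp (C i) 2 P)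
    (hCindep : iIndepFun C P)
    (hCmean : ∀ i, ∫ ω, C i ω ∂P = cbar)
    (hCvar : ∀ i, variance (C i) P = σC ^ 2)
    (hindep : IndepFun (fun ω (i : Fin N) => C i ω) (fun ω (j : Fin N) => B j ω) P) :
    variance (fun ω => ∑ i : Fin N, ∑ j : Fin N, C i ω * M i j * B j ω) P =
      bbar ^ 2 * σC ^ 2 * (∑ i : Fin N, (∑ j : Fin N, M i j) ^ 2) +
      cbar ^ 2 * σB ^ 2 * (∑ j : Fin N, (∑ i : Fin N, M i j) ^ 2) +
      σB ^ 2 * σC ^ 2 * ∑ i : Fin N, ∑ j : Fin N, (M i j) ^ 2 := by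
  rw [variance_sum_sum_mul_mul_of_indepFun M hC2 hB2 hindep]
  simp only [covariance_eq_ite_of_pairwise_indepFun hC2 fun _ _ h => hCindep.indepFun h,
    covariance_eq_ite_of_pairwise_indepFun hB2 fun _ _ h => hBindep.indepFun h,
    hCvar, hBvar, hCmean, hBmean]
  rw [Matrix.sum_sum_sum_sum_mul_ite]
  ring

/-- Exact variance formula for the bilinear form with i.i.d. square-integrable random input
weights `B` (mean `bbar`, variance `σB²`) and i.i.d. square-integrable random output
weights `C` (mean `cbar`, variance `σC²`), the vector `C` independent of the vector `B`:
`Var(∑ᵢⱼ Cᵢ Mᵢⱼ Bⱼ) = bbar² σC² ∑ᵢ (∑ⱼ Mᵢⱼ)² + cbar² σB² ∑ⱼ (∑ᵢ Mᵢⱼ)²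
  + σB² σC² ∑ᵢⱼ Mᵢⱼ²`.
This yields the computable confidence interval for the transfer function of a network with
random input and output weights. -/
theorem variance_transfer_function_random_weights
    {Ω : Type*} [MeasurableSpace Ω] (P : Measure Ω) [IsProbabilityMeasure P]
    (N : ℕ) (hN : 0 < N) (M : Matrix (Fin N) (Fin N) ℝ)
    (B C : Fin N → Ω → ℝ) (bbar cbar σB σC : ℝ)
    (hB2 : ∀ i, MemLp (B i) 2 P)
    (hBindep : iIndepFun B P)
    (hBid : ∀ i j, IdentDistrib (B i) (B j) P P)
    (hBmean : ∀ i, ∫ ω, B i ω ∂P = bbar)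
    (hBvar : ∀ i, variance (B i) P = σB ^ 2)
    (hC2 : ∀ i, MemLp (C i) 2 P)
    (hCindep : iIndepFun C P)
    (hCid : ∀ i j, IdentDistrib (C i) (C j) P P)
    (hCmean : ∀ i, ∫ ω, C i ω ∂P = cbar)
    (hCvar : ∀ i, variance (C i) P = σC ^ 2)
    (hindep : IndepFun (fun ω (i : Fin N) => C i ω) (fun ω (j : Fin N) => B j ω) P) :
    variance (fun ω => ∑ i : Fin N, ∑ j : Fin N, C i ω * M i j * B j ω) P =
      bbar ^ 2 * σC ^ 2 * (∑ i : Fin N, (∑ j : Fin N, M i j) ^ 2) +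
      cbar ^ 2 * σB ^ 2 * (∑ j : Fin N, (∑ i : Fin N, M i j) ^ 2) +
      σB ^ 2 * σC ^ 2 * ∑ i : Fin N, ∑ j : Fin N, (M i j) ^ 2 :=
  variance_transfer_function_random_weights_general P N M B C bbar cbar σB σC hB2 hBindep hBmean
    hBvar hC2 hCindep hCmean hCvar hindep
end

section
/- Let σ be a permutation of {1,…,N} acting transitively on indices (for every pair i, j there is an integer m with σ^m(i) = j), and suppose W is invariant under σ, i.e., W_{σ(i),σ(j)} = W_{i,j} for all i, j. Then all row sums of W are equal and all column sums of W are equal; consequently μ_n = μ_1^n for all n ≥ 1 and κ_n = 0 for every n ≥ 2. (Networks with a rotational/translational connectivity symmetry have the motif cumulant structure of an Erdős–Rényi network.) -/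
open Matrix Finset

/-!
Invariance of `W` under `σ` makes the row-sum and column-sum functions `σ`-invariant, hence
constant by transitivity. A matrix whose row sums all equal `r` has `W ^ n` with row sums `r ^ n`,
so `μ_n = (r / N) ^ n = μ_1 ^ n`. Finally, when the moments are the powers of `μ_1` the cumulant
recursion is solved by `κ_1 = μ_1` and `κ_n = 0` for `n ≥ 2`.
-/

namespace Equiv.Perm

variable {ι α : Type*} (σ : Perm ι) {f : ι → α}

theorem apply_pow_eq_of_apply_eq (hf : ∀ i, f (σ i) = f i) (m : ℕ) (i : ι) :
    f ((σ ^ m) i) = f i := by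
  induction m with
  | zero => rfl
  | succ m ih => rw [pow_succ', mul_apply, hf, ih]

theorem exists_forall_eq_of_apply_eq [Nonempty α] (htrans : ∀ i j, ∃ m : ℕ, (σ ^ m) i = j)
    (hf : ∀ i, f (σ i) = f i) : ∃ r, ∀ i, f i = r := by
  cases isEmpty_or_nonempty ι with
  | inl => exact ⟨Classical.arbitrary α, isEmptyElim⟩
  | inr hι =>
    obtain ⟨i₀⟩ := hι
    refine ⟨f i₀, fun i => ?_⟩
    obtain ⟨m, rfl⟩ := htrans i₀ i
    exact σ.apply_pow_eq_of_apply_eq hf m i₀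

end Equiv.Perm

namespace Matrix

variable {ι R : Type*} [Fintype ι]

section Invariant

variable [AddCommMonoid R] {W : Matrix ι ι R} (σ : Equiv.Perm ι)

theorem sum_row_perm_apply (hinv : ∀ i j, W (σ i) (σ j) = W i j) (i : ι) :
    ∑ j, W (σ i) j = ∑ j, W i j := by
  rw [← Equiv.sum_comp σ]
  simp only [hinv]

theorem sum_col_perm_apply (hinv : ∀ i j, W (σ i) (σ j) = W i j) (j : ι) :
    ∑ i, W i (σ j) = ∑ i, W i j := by
  rw [← Equiv.sum_comp σ]
  simp only [hinv]

end Invariant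

theorem sum_pow_apply_eq_pow [CommSemiring R] [DecidableEq ι] {W : Matrix ι ι R} {r : R}
    (hrow : ∀ i, ∑ j, W i j = r) (n : ℕ) (i : ι) : ∑ j, (W ^ n) i j = r ^ n := by
  induction n generalizing i with
  | zero => simp [one_apply]
  | succ n ih =>
    calc ∑ j, (W ^ (n + 1)) i j = ∑ k, (W ^ n) i k * ∑ j, W k j := by
          simp only [pow_succ, mul_apply, mul_sum]
          exact sum_comm
      _ = r ^ (n + 1) := by simp only [hrow, ← sum_mul, ih, pow_succ]

end Matrix

theorem one_div_pow_succ_mul_mul_pow {K : Type*} [Field K] (a b : K) {n : ℕ} (hn : n ≠ 0) :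
    1 / a ^ (n + 1) * (a * b ^ n) = (b / a) ^ n := by
  rcases eq_or_ne a 0 with rfl | ha
  · simp [hn]
  · rw [div_pow, pow_succ]
    field_simp

theorem cumulant_eq_zero_of_moment_eq_pow {R : Type*} [CommRing R] {μ κ : ℕ → R} {x : R}
    (hμ : ∀ n, 1 ≤ n → μ n = x ^ n)
    (hκ : ∀ n, 1 ≤ n → κ n = μ n - ∑ k ∈ Ico 1 n, κ k * μ (n - k)) {n : ℕ} (hn : 2 ≤ n) :
    κ n = 0 := by
  induction n using Nat.strong_induction_on with
  | _ n ih =>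
    have hκ1 : κ 1 = x := by simpa [hμ 1 le_rfl] using hκ 1 le_rfl
    -- only the `k = 1` term of the recursion survives, and it cancels `μ n`
    have hsum : ∑ k ∈ Ico 1 n, κ k * μ (n - k) = κ 1 * μ (n - 1) := by
      refine sum_eq_single_of_mem 1 (mem_Ico.mpr ⟨le_rfl, hn⟩) fun k hk hk1 => ?_
      obtain ⟨hk_ge, hkn⟩ := mem_Ico.mp hk
      rw [ih k hkn (by omega), zero_mul]
    obtain ⟨m, rfl⟩ : ∃ m, n = m + 1 := ⟨n - 1, by omega⟩
    rw [hκ _ (by omega), hsum, hκ1, hμ _ (by omega), hμ _ (by omega), Nat.add_sub_cancel,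
      pow_succ, mul_comm, sub_self]

theorem symmetric_network_motif_cumulants_general
    (N : ℕ) (W : Matrix (Fin N) (Fin N) ℂ)
    (μ κ : ℕ → ℂ)
    (hμ : ∀ n : ℕ, 1 ≤ n →
      μ n = (1 / (N : ℂ) ^ (n + 1)) * ∑ i : Fin N, ∑ j : Fin N, (W ^ n) i j)
    (hκ : ∀ n : ℕ, 1 ≤ n →
      κ n = μ n - ∑ k ∈ Finset.Ico 1 n, κ k * μ (n - k))
    (σ : Equiv.Perm (Fin N))
    (htrans : ∀ i j : Fin N, ∃ m : ℕ, (σ ^ m) i = j)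
    (hinv : ∀ i j : Fin N, W (σ i) (σ j) = W i j) :
    (∃ r : ℂ, ∀ i : Fin N, ∑ j : Fin N, W i j = r) ∧
    (∃ c : ℂ, ∀ j : Fin N, ∑ i : Fin N, W i j = c) ∧
    (∀ n : ℕ, 1 ≤ n → μ n = (μ 1) ^ n) ∧
    (∀ n : ℕ, 2 ≤ n → κ n = 0) := by
  obtain ⟨r, hrow⟩ := σ.exists_forall_eq_of_apply_eq (f := fun i => ∑ j, W i j) htrans
    (sum_row_perm_apply σ hinv)
  have hcol := σ.exists_forall_eq_of_apply_eq (f := fun j => ∑ i, W i j) htrans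
    (sum_col_perm_apply σ hinv)
  have hμr : ∀ n, 1 ≤ n → μ n = (r / N) ^ n := fun n hn => by
    simp only [hμ n hn, sum_pow_apply_eq_pow hrow, sum_const, card_univ, Fintype.card_fin,
      nsmul_eq_mul]
    exact one_div_pow_succ_mul_mul_pow _ _ (by omega)
  have hμpow : ∀ n, 1 ≤ n → μ n = μ 1 ^ n := fun n hn => by
    rw [hμr n hn, hμr 1 le_rfl, pow_one]
  exact ⟨⟨r, hrow⟩, hcol, hμpow, fun n => cumulant_eq_zero_of_moment_eq_pow hμpow hκ⟩

/-- If `W` is invariant under a permutation `σ` acting transitively on indices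
(`W_{σ(i),σ(j)} = W_{i,j}` and every index can be mapped to every other by a power of `σ`),
then all row sums of `W` are equal and all column sums of `W` are equal; consequently
`μ_n = μ_1 ^ n` for all `n ≥ 1` and `κ_n = 0` for all `n ≥ 2`.  Networks with a
rotational/translational connectivity symmetry have the motif cumulant structure of an
Erdős–Rényi network. -/
theorem symmetric_network_motif_cumulants
    (N : ℕ) (hN : 0 < N) (W : Matrix (Fin N) (Fin N) ℂ)
    (μ κ : ℕ → ℂ)
    (hμ0 : μ 0 = 1)
    (hμ : ∀ n : ℕ, 1 ≤ n →
      μ n = (1 / (N : ℂ) ^ (n + 1)) * ∑ i : Fin N, ∑ j : Fin N, (W ^ n) i j)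
    (hκ : ∀ n : ℕ, 1 ≤ n →
      κ n = μ n - ∑ k ∈ Finset.Ico 1 n, κ k * μ (n - k))
    (σ : Equiv.Perm (Fin N))
    (htrans : ∀ i j : Fin N, ∃ m : ℕ, (σ ^ m) i = j)
    (hinv : ∀ i j : Fin N, W (σ i) (σ j) = W i j) :
    (∃ r : ℂ, ∀ i : Fin N, ∑ j : Fin N, W i j = r) ∧
    (∃ c : ℂ, ∀ j : Fin N, ∑ i : Fin N, W i j = c) ∧
    (∀ n : ℕ, 1 ≤ n → μ n = (μ 1) ^ n) ∧
    (∀ n : ℕ, 2 ≤ n → κ n = 0) :=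
  symmetric_network_motif_cumulants_general N W μ κ hμ hκ σ htrans hinv
end
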